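/- arXiv:1501.05141 — 5 statements merged into one kernel-verified Lean document; each statement's English description precedes it below -/
import Mathlib

section
/- Let X and Y be decision spaces on a type α with values in a real vector space E, and let M : Set α → ℝ. Then the merge X ⊗ Y is again a decision space (its first components are nonempty and pairwise disjoint), and its support satisfies supp(X ⊗ Y) = supp(X) ∪ supp(Y). -/
open Set

/-- The support of a decision space: the union of the first components of its pairs. -/
def DSsupp {α E : Type*} (X : Set (Set α × E)) : Set α := ⋃ p ∈ X, p.1

/-- A decision space on `α` with values in `E`: a finite set of pairs `(s, v)`
whose first components are nonempty and pairwise disjoint. -/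
def IsDecisionSpace {α E : Type*} (X : Set (Set α × E)) : Prop :=
  X.Finite ∧ (∀ p ∈ X, p.1.Nonempty) ∧
    ∀ p ∈ X, ∀ q ∈ X, p ≠ q → Disjoint p.1 q.1

/-- The merge `X ⊗ Y` of two decision spaces with respect to the specialization `M`. -/
def DSmerge {α E : Type*} [AddCommMonoid E] [SMul ℝ E] (M : Set α → ℝ)
    (X Y : Set (Set α × E)) : Set (Set α × E) :=
  {z | (∃ p ∈ X, ∃ q ∈ Y, (p.1 ∩ q.1).Nonempty ∧
          z = (p.1 ∩ q.1,
               (M p.1 / (M p.1 + M q.1)) • p.2 + (M q.1 / (M p.1 + M q.1)) • q.2)) ∨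
       (∃ p ∈ X, (p.1 \ DSsupp Y).Nonempty ∧ z = (p.1 \ DSsupp Y, p.2)) ∨
       (∃ q ∈ Y, (q.1 \ DSsupp X).Nonempty ∧ z = (q.1 \ DSsupp X, q.2))}

/-- The restriction `X ⊙ Y` of a decision space `X` by a decision space `Y`. -/
def DSrestrict {α E : Type*} (X Y : Set (Set α × E)) : Set (Set α × E) :=
  {z | ∃ p ∈ X, (p.1 ∩ DSsupp Y).Nonempty ∧ z = (p.1 ∩ DSsupp Y, p.2)}

/-- The merge of two decision spaces is a decision space, and its support is the
union of the supports. -/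
theorem DSmerge_isDecisionSpace_and_supp {α E : Type*} [AddCommGroup E] [Module ℝ E]
    (M : Set α → ℝ) (X Y : Set (Set α × E))
    (hX : IsDecisionSpace X) (hY : IsDecisionSpace Y) :
    IsDecisionSpace (DSmerge M X Y) ∧ DSsupp (DSmerge M X Y) = DSsupp X ∪ DSsupp Y := by
  obtain ⟨hXf, hXne, hXd⟩ := hX
  obtain ⟨hYf, hYne, hYd⟩ := hY
  have hsubX : ∀ p ∈ X, p.1 ⊆ DSsupp X := fun p hp =>
    Set.subset_biUnion_of_mem (u := fun p : Set α × E => p.1) hp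
  have hsubY : ∀ q ∈ Y, q.1 ⊆ DSsupp Y := fun q hq =>
    Set.subset_biUnion_of_mem (u := fun q : Set α × E => q.1) hq
  constructor
  · refine ⟨?_, ?_, ?_⟩
    · -- finiteness
      have hsub : DSmerge M X Y ⊆
          ((fun pq : (Set α × E) × (Set α × E) => ((pq.1.1 ∩ pq.2.1 : Set α),
              (M pq.1.1 / (M pq.1.1 + M pq.2.1)) • pq.1.2 +
              (M pq.2.1 / (M pq.1.1 + M pq.2.1)) • pq.2.2)) '' (X ×ˢ Y)
          ∪ (fun p : Set α × E => ((p.1 \ DSsupp Y : Set α), p.2)) '' X)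
          ∪ (fun q : Set α × E => ((q.1 \ DSsupp X : Set α), q.2)) '' Y := by
        rintro z (⟨p, hp, q, hq, -, rfl⟩ | ⟨p, hp, -, rfl⟩ | ⟨q, hq, -, rfl⟩)
        · exact Or.inl (Or.inl ⟨(p, q), ⟨hp, hq⟩, rfl⟩)
        · exact Or.inl (Or.inr ⟨p, hp, rfl⟩)
        · exact Or.inr ⟨q, hq, rfl⟩
      exact Set.Finite.subset
        ((((hXf.prod hYf).image _).union (hXf.image _)).union (hYf.image _)) hsub
    · -- nonemptiness
      rintro z (⟨p, hp, q, hq, hne, rfl⟩ | ⟨p, hp, hne, rfl⟩ | ⟨q, hq, hne, rfl⟩) <;>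
        exact hne
    · -- pairwise disjointness
      rintro z (⟨p, hp, q, hq, hne, rfl⟩ | ⟨p, hp, hne, rfl⟩ | ⟨q, hq, hne, rfl⟩) z'
        (⟨p', hp', q', hq', hne', rfl⟩ | ⟨p', hp', hne', rfl⟩ | ⟨q', hq', hne', rfl⟩) hzz
      · -- (i)-(i)
        by_cases hpp : p = p'
        · subst hpp
          by_cases hqq : q = q'
          · subst hqq; exact absurd rfl hzz
          · exact Set.disjoint_of_subset Set.inter_subset_right Set.inter_subset_right
              (hYd q hq q' hq' hqq)
        · exact Set.disjoint_of_subset Set.inter_subset_left Set.inter_subset_left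
            (hXd p hp p' hp' hpp)
      · -- (i)-(ii)
        by_cases hpp : p = p'
        · subst hpp
          exact Set.disjoint_sdiff_right.mono_left
            (Set.inter_subset_right.trans (hsubY q hq))
        · exact Set.disjoint_of_subset Set.inter_subset_left Set.diff_subset
            (hXd p hp p' hp' hpp)
      · -- (i)-(iii)
        by_cases hqq : q = q'
        · subst hqq
          exact Set.disjoint_sdiff_right.mono_left
            (Set.inter_subset_left.trans (hsubX p hp))
        · exact Set.disjoint_of_subset Set.inter_subset_right Set.diff_subset
            (hYd q hq q' hq' hqq)
      · -- (ii)-(i)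
        by_cases hpp : p = p'
        · subst hpp
          exact (Set.disjoint_sdiff_right.mono_left
            (Set.inter_subset_right.trans (hsubY q' hq'))).symm
        · exact Set.disjoint_of_subset Set.diff_subset Set.inter_subset_left
            (hXd p hp p' hp' hpp)
      · -- (ii)-(ii)
        by_cases hpp : p = p'
        · subst hpp; exact absurd rfl hzz
        · exact Set.disjoint_of_subset Set.diff_subset Set.diff_subset
            (hXd p hp p' hp' hpp)
      · -- (ii)-(iii)
        exact Set.disjoint_of_subset Set.diff_subset (le_refl _)
          (Set.disjoint_sdiff_right.mono_left (hsubX p hp))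
      · -- (iii)-(i)
        by_cases hqq : q = q'
        · subst hqq
          exact (Set.disjoint_sdiff_right.mono_left
            (Set.inter_subset_left.trans (hsubX p' hp'))).symm
        · exact Set.disjoint_of_subset Set.diff_subset Set.inter_subset_right
            (hYd q hq q' hq' hqq)
      · -- (iii)-(ii)
        exact (Set.disjoint_of_subset Set.diff_subset (le_refl _)
          (Set.disjoint_sdiff_right.mono_left (hsubX p' hp'))).symm
      · -- (iii)-(iii)
        by_cases hqq : q = q'
        · subst hqq; exact absurd rfl hzz
        · exact Set.disjoint_of_subset Set.diff_subset Set.diff_subset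
            (hYd q hq q' hq' hqq)
  · -- support equality
    apply Set.Subset.antisymm
    · intro x hx
      simp only [DSsupp, Set.mem_iUnion] at hx
      obtain ⟨z, hz, hxz⟩ := hx
      rcases hz with ⟨p, hp, q, hq, hne, rfl⟩ | ⟨p, hp, hne, rfl⟩ | ⟨q, hq, hne, rfl⟩
      · exact Or.inl (hsubX p hp hxz.1)
      · exact Or.inl (hsubX p hp hxz.1)
      · exact Or.inr (hsubY q hq hxz.1)
    · rintro x (hx | hx)
      · simp only [DSsupp, Set.mem_iUnion] at hx ⊢
        obtain ⟨p, hp, hxp⟩ := hx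
        by_cases hy : x ∈ DSsupp Y
        · simp only [DSsupp, Set.mem_iUnion] at hy
          obtain ⟨q, hq, hxq⟩ := hy
          exact ⟨_, Or.inl ⟨p, hp, q, hq, ⟨x, hxp, hxq⟩, rfl⟩, hxp, hxq⟩
        · exact ⟨_, Or.inr (Or.inl ⟨p, hp, ⟨x, hxp, hy⟩, rfl⟩), hxp, hy⟩
      · simp only [DSsupp, Set.mem_iUnion] at hx ⊢
        obtain ⟨q, hq, hxq⟩ := hx
        by_cases hy : x ∈ DSsupp X
        · simp only [DSsupp, Set.mem_iUnion] at hy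
          obtain ⟨p, hp, hxp⟩ := hy
          exact ⟨_, Or.inl ⟨p, hp, q, hq, ⟨x, hxp, hxq⟩, rfl⟩, hxp, hxq⟩
        · exact ⟨_, Or.inr (Or.inr ⟨q, hq, ⟨x, hxq, hy⟩, rfl⟩), hxq, hy⟩
end

section
/- The merge operator ⊗ is idempotent: for every decision space X on a type α with values in a real vector space E, and any specialization function M : Set α → ℝ that is strictly positive on nonempty sets, X ⊗ X = X. -/
/-! Since the first components of distinct pairs of `X` are disjoint, the only pairs of `X × X`
that meet are the diagonal ones `(p, p)`, which merge back to `p` because both weights are `1/2`;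
and every `s \ supp X` with `(s, v) ∈ X` is empty. -/

open Set

theorem smul_add_smul_div_add_self {K E : Type*} [DivisionRing K] [CharZero K]
    [AddCommMonoid E] [Module K E] {a : K} (ha : a ≠ 0) (v : E) :
    (a / (a + a)) • v + (a / (a + a)) • v = v := by
  rw [← add_smul, ← add_div, div_self (by simpa [← two_mul] using ha), one_smul]

theorem subset_DSsupp {α E : Type*} {X : Set (Set α × E)} {p : Set α × E} (hp : p ∈ X) :
    p.1 ⊆ DSsupp X :=
  subset_biUnion_of_mem (u := Prod.fst) hp

theorem diff_DSsupp_eq_empty_of_mem {α E : Type*} {X : Set (Set α × E)} {p : Set α × E} (hp : p ∈ X) :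
    p.1 \ DSsupp X = ∅ :=
  sdiff_eq_empty.mpr (subset_DSsupp hp)

theorem IsDecisionSpace.eq_of_inter_nonempty {α E : Type*} {X : Set (Set α × E)}
    (hX : IsDecisionSpace X) {p q : Set α × E} (hp : p ∈ X) (hq : q ∈ X)
    (hpq : (p.1 ∩ q.1).Nonempty) : p = q := by
  by_contra hne
  exact hpq.ne_empty (hX.2.2 p hp q hq hne).inter_eq

/-- The merge operator is idempotent for specializations that are strictly positive on
nonempty sets. -/
theorem DSmerge_idem {α E : Type*} [AddCommGroup E] [Module ℝ E]
    (M : Set α → ℝ) (hM : ∀ s : Set α, s.Nonempty → 0 < M s)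
    (X : Set (Set α × E)) (hX : IsDecisionSpace X) :
    DSmerge M X X = X := by
  have self_merge : ∀ p ∈ X, (p.1 ∩ p.1,
      (M p.1 / (M p.1 + M p.1)) • p.2 + (M p.1 / (M p.1 + M p.1)) • p.2) = p := fun p hp => by
    rw [inter_self, smul_add_smul_div_add_self (hM p.1 (hX.2.1 p hp)).ne']
  ext z
  constructor
  · rintro (⟨p, hp, q, hq, hpq, rfl⟩ | ⟨p, hp, hpd, rfl⟩ | ⟨p, hp, hpd, rfl⟩)
    · obtain rfl := hX.eq_of_inter_nonempty hp hq hpq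
      rwa [self_merge p hp]
    all_goals exact absurd (diff_DSsupp_eq_empty_of_mem hp) hpd.ne_empty
  · intro hz
    exact Or.inl ⟨z, hz, z, hz, by simpa using hX.2.1 z hz, (self_merge z hz).symm⟩
end

section
/- The merge operator ⊗ is not associative: there exist decision spaces X, Y, Z on ℝ with values in ℝ, all of whose first components are intervals of positive length, such that, with specialization function M(s) = (Lebesgue-measure of s).toReal, one has (X ⊗ Y) ⊗ Z ≠ X ⊗ (Y ⊗ Z). -/
open Set

lemma merge_single (M : Set ℝ → ℝ) (s : Set ℝ) (hs : s.Nonempty) (v w : ℝ) :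
    DSmerge M {(s, v)} {(s, w)} =
      {(s, (M s / (M s + M s)) • v + (M s / (M s + M s)) • w)} := by
  ext z
  constructor
  · rintro (⟨p, hp, q, hq, -, rfl⟩ | ⟨p, hp, hne, rfl⟩ | ⟨q, hq, hne, rfl⟩)
    · simp only [Set.mem_singleton_iff] at hp hq
      subst hp; subst hq
      simp [Set.inter_self]
    · simp only [Set.mem_singleton_iff] at hp
      subst hp
      simp [DSsupp] at hne
    · simp only [Set.mem_singleton_iff] at hq
      subst hq
      simp [DSsupp] at hne
  · rintro rfl
    left
    exact ⟨(s, v), rfl, (s, w), rfl, by simpa [Set.inter_self] using hs, by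
      simp [Set.inter_self]⟩

/-- The merge operator is not associative: there are decision spaces on `ℝ` whose
elements are intervals of positive length such that, with the Lebesgue-measure
specialization, the two ways of merging three spaces give different results. -/
theorem DSmerge_not_assoc :
    ∃ X Y Z : Set (Set ℝ × ℝ),
      IsDecisionSpace X ∧ IsDecisionSpace Y ∧ IsDecisionSpace Z ∧
      (∀ p ∈ X ∪ Y ∪ Z, ∃ a b : ℝ, a < b ∧ p.1 = Set.Ioo a b) ∧
      DSmerge (fun s => (MeasureTheory.volume s).toReal)
          (DSmerge (fun s => (MeasureTheory.volume s).toReal) X Y) Z ≠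
        DSmerge (fun s => (MeasureTheory.volume s).toReal) X
          (DSmerge (fun s => (MeasureTheory.volume s).toReal) Y Z) := by
  
  refine ⟨{(Set.Ioo 0 1, (1:ℝ))}, {(Set.Ioo 0 1, (0:ℝ))}, {(Set.Ioo 0 1, (0:ℝ))},
    ?_, ?_, ?_, ?_, ?_⟩
  · exact ⟨Set.finite_singleton _, by rintro p rfl; exact ⟨1/2, by norm_num⟩,
      by rintro p rfl q rfl h; exact absurd rfl h⟩
  · exact ⟨Set.finite_singleton _, by rintro p rfl; exact ⟨1/2, by norm_num⟩,
      by rintro p rfl q rfl h; exact absurd rfl h⟩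
  · exact ⟨Set.finite_singleton _, by rintro p rfl; exact ⟨1/2, by norm_num⟩,
      by rintro p rfl q rfl h; exact absurd rfl h⟩
  · rintro p hp
    refine ⟨0, 1, by norm_num, ?_⟩
    rcases hp with (rfl | rfl) | rfl <;> rfl
  · set M : Set ℝ → ℝ := fun s => (MeasureTheory.volume s).toReal with hM
    have hs : (Set.Ioo (0:ℝ) 1).Nonempty := ⟨1/2, by norm_num⟩
    have hMs : M (Set.Ioo 0 1) = 1 := by
      simp [hM, Real.volume_Ioo]
    have hc : M (Set.Ioo 0 1) / (M (Set.Ioo 0 1) + M (Set.Ioo 0 1)) = 1/2 := by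
      rw [hMs]; norm_num
    have e1 : DSmerge M {(Set.Ioo 0 1, (1:ℝ))} {(Set.Ioo 0 1, (0:ℝ))}
        = {(Set.Ioo 0 1, (1/2 : ℝ))} := by
      rw [merge_single M _ hs, hc]; norm_num
    have e2 : DSmerge M {(Set.Ioo 0 1, (0:ℝ))} {(Set.Ioo 0 1, (0:ℝ))}
        = {(Set.Ioo 0 1, (0 : ℝ))} := by
      rw [merge_single M _ hs, hc]; norm_num
    have e3 : DSmerge M {(Set.Ioo 0 1, (1/2:ℝ))} {(Set.Ioo 0 1, (0:ℝ))}
        = {(Set.Ioo 0 1, (1/4 : ℝ))} := by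
      rw [merge_single M _ hs, hc]; norm_num
    have e4 : DSmerge M {(Set.Ioo 0 1, (1:ℝ))} {(Set.Ioo 0 1, (0:ℝ))}
        = {(Set.Ioo 0 1, (1/2 : ℝ))} := e1
    rw [e1, e3, e2, e4]
    intro h
    rw [Set.singleton_eq_singleton_iff, Prod.mk.injEq] at h
    norm_num at h
end

section
/- The composite operator ⊕, defined by X ⊕ Y = ((X ⊗ Y) ⊙ X) ⊙ Y, is idempotent: for every decision space X on a type α with values in a real vector space E, and any specialization function M : Set α → ℝ that is strictly positive on nonempty sets, X ⊕ X = X. -/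
open Set

/-- The composite operator `X ⊕ Y = ((X ⊗ Y) ⊙ X) ⊙ Y` is idempotent for
specializations that are strictly positive on nonempty sets. -/
theorem DSoplus_idem {α E : Type*} [AddCommGroup E] [Module ℝ E]
    (M : Set α → ℝ) (hM : ∀ s : Set α, s.Nonempty → 0 < M s)
    (X : Set (Set α × E)) (hX : IsDecisionSpace X) :
    DSrestrict (DSrestrict (DSmerge M X X) X) X = X := by

  obtain ⟨hfin, hne, hdisj⟩ := hX
  have hsub : ∀ p ∈ X, p.1 ⊆ DSsupp X := fun p hp =>
    subset_biUnion_of_mem (u := fun p => p.1) hp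
  have hrestr : DSrestrict X X = X := by
    ext z
    constructor
    · rintro ⟨p, hp, hne', rfl⟩
      rwa [inter_eq_left.mpr (hsub p hp)]
    · intro hz
      exact ⟨z, hz, by rw [inter_eq_left.mpr (hsub z hz)]; exact hne z hz,
        by rw [inter_eq_left.mpr (hsub z hz)]⟩
  have hmerge : DSmerge M X X = X := by
    ext z
    constructor
    · rintro (⟨p, hp, q, hq, hne', rfl⟩ | ⟨p, hp, hne', rfl⟩ | ⟨p, hp, hne', rfl⟩)
      · have hpq : p = q := by
          by_contra h
          exact hne'.not_subset_empty (disjoint_iff_inter_eq_empty.mp (hdisj p hp q hq h) ▸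
            subset_rfl)
        subst hpq
        have hMp : (0:ℝ) < M p.1 := hM p.1 (hne p hp)
        have : (M p.1 / (M p.1 + M p.1)) • p.2 + (M p.1 / (M p.1 + M p.1)) • p.2 = p.2 := by
          rw [← add_smul]
          have : M p.1 / (M p.1 + M p.1) + M p.1 / (M p.1 + M p.1) = 1 := by
            field_simp
          rw [this, one_smul]
        simpa [inter_self, this] using hp
      · exact absurd hne' (by simp [diff_eq_empty.mpr (hsub p hp)])
      · exact absurd hne' (by simp [diff_eq_empty.mpr (hsub p hp)])
    · intro hz
      left
      refine ⟨z, hz, z, hz, by simpa [inter_self] using hne z hz, ?_⟩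
      have hMp : (0:ℝ) < M z.1 := hM z.1 (hne z hz)
      have h1 : M z.1 / (M z.1 + M z.1) + M z.1 / (M z.1 + M z.1) = 1 := by
        field_simp
      rw [inter_self, ← add_smul, h1, one_smul]
  rw [hmerge, hrestr, hrestr]
end

section
/- The composite operator ⊙̄, defined by X ⊙̄ Y = (X ⊙ Y) ⊗ (Y ⊙ X), is idempotent: for every decision space X on a type α with values in a real vector space E, and any specialization function M : Set α → ℝ that is strictly positive on nonempty sets, X ⊙̄ X = X. -/
open Set

/-- The composite operator `X ⊙̄ Y = (X ⊙ Y) ⊗ (Y ⊙ X)` is idempotent for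
specializations that are strictly positive on nonempty sets. -/
theorem DSbarodot_idem {α E : Type*} [AddCommGroup E] [Module ℝ E]
    (M : Set α → ℝ) (hM : ∀ s : Set α, s.Nonempty → 0 < M s)
    (X : Set (Set α × E)) (hX : IsDecisionSpace X) :
    DSmerge M (DSrestrict X X) (DSrestrict X X) = X := by
  obtain ⟨hfin, hne, hdisj⟩ := hX
  have hsub : ∀ p ∈ X, p.1 ⊆ DSsupp X := fun p hp => Set.subset_biUnion_of_mem hp
  have hrest : DSrestrict X X = X := by
    ext z
    constructor
    · rintro ⟨p, hp, hne', rfl⟩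
      have h1 : p.1 ∩ DSsupp X = p.1 := inter_eq_left.mpr (hsub p hp)
      rw [h1]
      simpa using hp
    · intro hz
      refine ⟨z, hz, ?_, ?_⟩ <;> rw [inter_eq_left.mpr (hsub z hz)]
      exact hne z hz
  rw [hrest]
  have hcoef : ∀ p : Set α × E, p ∈ X →
      (M p.1 / (M p.1 + M p.1)) • p.2 + (M p.1 / (M p.1 + M p.1)) • p.2 = p.2 := by
    intro p hp
    have hpos := hM p.1 (hne p hp)
    rw [← add_smul]
    have : M p.1 / (M p.1 + M p.1) + M p.1 / (M p.1 + M p.1) = 1 := by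
      field_simp
    rw [this, one_smul]
  ext z
  simp only [DSmerge, mem_setOf_eq]
  constructor
  · rintro (⟨p, hp, q, hq, hne', rfl⟩ | ⟨p, hp, hne', rfl⟩ | ⟨q, hq, hne', rfl⟩)
    · have hpq : p = q := by
        by_contra h
        rw [(hdisj p hp q hq h).inter_eq] at hne'
        exact hne'.ne_empty rfl
      subst hpq
      rw [inter_self, hcoef p hp]
      simpa using hp
    · rw [diff_eq_empty.mpr (hsub p hp)] at hne'
      exact absurd rfl hne'.ne_empty
    · rw [diff_eq_empty.mpr (hsub q hq)] at hne'
      exact absurd rfl hne'.ne_empty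
  · intro hz
    left
    refine ⟨z, hz, z, hz, ?_, ?_⟩
    · rw [inter_self]; exact hne z hz
    · rw [inter_self, hcoef z hz]
end
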